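/- arXiv:1612.08714 — 2 statements merged into one kernel-verified Lean document; each statement's English description precedes it below -/
import Mathlib

section
/- Let V be a finite type with card V = n ≥ 2, let G be a simple graph on V, and set p = 1/2 − 1/(n(n−1)). For distinct i, j ∈ V define q(i,j) = p + (1 − p)·(2/(n(n−1))) if G.Adj i j, and q(i,j) = p otherwise. Then for all distinct i, j ∈ V: q(i,j) ≥ 1/2 if and only if G.Adj i j. -/
/-- In the NP-hardness reduction with `α = 1/2` and `p = 1/2 - 1/(n(n-1))`, the
co-occurrence probability `q i j` (equal to `p + (1-p)·(2/(n(n-1)))` for edges and `p`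
for non-edges) satisfies `q i j ≥ 1/2` if and only if `i` and `j` are adjacent in `G`. -/
theorem reduction_threshold_iff_adj (V : Type*) [Fintype V]
    (n : ℕ) (hcard : Fintype.card V = n) (hn : 2 ≤ n)
    (G : SimpleGraph V) [DecidableRel G.Adj]
    (p : ℝ) (hp : p = 1 / 2 - 1 / ((n : ℝ) * ((n : ℝ) - 1)))
    (q : V → V → ℝ)
    (hq : ∀ i j : V, i ≠ j →
      q i j = if G.Adj i j then p + (1 - p) * (2 / ((n : ℝ) * ((n : ℝ) - 1))) else p) :
    ∀ i j : V, i ≠ j → (q i j ≥ 1 / 2 ↔ G.Adj i j) := by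
  intro i j hij
  have hn2 : (2 : ℝ) ≤ (n : ℝ) := by exact_mod_cast hn
  have hN : (2 : ℝ) ≤ (n : ℝ) * ((n : ℝ) - 1) := by nlinarith
  have hNpos : (0 : ℝ) < (n : ℝ) * ((n : ℝ) - 1) := by linarith
  rw [hq i j hij]
  by_cases h : G.Adj i j
  · simp only [h, if_true, iff_true]
    rw [hp]
    have : (0:ℝ) < 1 / ((n : ℝ) * ((n : ℝ) - 1)) := by positivity
    have key : 1 / 2 - 1 / ((n:ℝ) * ((n:ℝ) - 1)) +
        (1 - (1 / 2 - 1 / ((n:ℝ) * ((n:ℝ) - 1)))) * (2 / ((n:ℝ) * ((n:ℝ) - 1)))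
        = 1 / 2 + 2 * (1 / ((n:ℝ) * ((n:ℝ) - 1)))^2 := by ring
    rw [key]
    nlinarith [sq_nonneg (1/((n:ℝ)*((n:ℝ)-1)))]
  · simp only [h, if_false, iff_false]
    rw [hp]
    have : (0:ℝ) < 1 / ((n : ℝ) * ((n : ℝ) - 1)) := by positivity
    linarith
end

section
/- Let V be a finite type with card V = n ≥ 2, let G be a simple graph on V, and set p = 1/2 − 1/(n(n−1)). For distinct i, j ∈ V define q(i,j) = p + (1 − p)·(2/(n(n−1))) if G.Adj i j, and q(i,j) = p otherwise. Then a finite set C ⊆ V satisfies q(i,j) ≥ 1/2 for all distinct i, j ∈ C if and only if C is a clique of G; consequently, C has maximum cardinality among all subsets of V whose distinct pairs all satisfy q(i,j) ≥ 1/2 if and only if C is a maximum clique of G. -/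
/-- Heart of the NP-hardness proof: with `p = 1/2 - 1/(n(n-1))` and co-occurrence
probabilities `q` as in the reduction, a finite set `C` has all its distinct pairs above
the `1/2` threshold iff `C` is a clique of `G`; consequently `C` is of maximum cardinality
among such sets iff `C` is a maximum clique of `G`. -/
theorem core_cluster_iff_max_clique (V : Type*) [Fintype V] [DecidableEq V]
    (n : ℕ) (hcard : Fintype.card V = n) (hn : 2 ≤ n)
    (G : SimpleGraph V) [DecidableRel G.Adj]
    (p : ℝ) (hp : p = 1 / 2 - 1 / ((n : ℝ) * ((n : ℝ) - 1)))
    (q : V → V → ℝ)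
    (hq : ∀ i j : V, i ≠ j →
      q i j = if G.Adj i j then p + (1 - p) * (2 / ((n : ℝ) * ((n : ℝ) - 1))) else p)
    (C : Finset V) :
    ((∀ i ∈ C, ∀ j ∈ C, i ≠ j → q i j ≥ 1 / 2) ↔ G.IsClique (C : Set V)) ∧
    (((∀ i ∈ C, ∀ j ∈ C, i ≠ j → q i j ≥ 1 / 2) ∧
        ∀ D : Finset V, (∀ i ∈ D, ∀ j ∈ D, i ≠ j → q i j ≥ 1 / 2) → D.card ≤ C.card) ↔
      (G.IsClique (C : Set V) ∧
        ∀ D : Finset V, G.IsClique (D : Set V) → D.card ≤ C.card)) := by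
  have hn2 : (2 : ℝ) ≤ (n : ℝ) := by exact_mod_cast hn
  have hden : (0 : ℝ) < (n : ℝ) * ((n : ℝ) - 1) := by nlinarith
  have ht : (0 : ℝ) < 1 / ((n : ℝ) * ((n : ℝ) - 1)) := by positivity
  set t : ℝ := 1 / ((n : ℝ) * ((n : ℝ) - 1)) with htdef
  have hkey : ∀ i j : V, i ≠ j → (q i j ≥ 1 / 2 ↔ G.Adj i j) := by
    intro i j hij
    rw [hq i j hij]
    by_cases h : G.Adj i j
    · simp only [h, if_true, iff_true]
      have h2t : 2 / ((n : ℝ) * ((n : ℝ) - 1)) = 2 * t := by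
        rw [htdef]; ring
      rw [hp, h2t]
      nlinarith [sq_nonneg t]
    · simp only [h, if_false, iff_false, not_le, ge_iff_le]
      rw [hp]; linarith
  have part1 : ∀ D : Finset V,
      ((∀ i ∈ D, ∀ j ∈ D, i ≠ j → q i j ≥ 1 / 2) ↔ G.IsClique (D : Set V)) := by
    intro D
    constructor
    · intro h x hx y hy hxy
      exact (hkey x y hxy).mp (h x hx y hy hxy)
    · intro h i hi j hj hij
      exact (hkey i j hij).mpr (h hi hj hij)
  refine ⟨part1 C, ?_⟩
  constructor
  · rintro ⟨h1, h2⟩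
    exact ⟨(part1 C).mp h1, fun D hD => h2 D ((part1 D).mpr hD)⟩
  · rintro ⟨h1, h2⟩
    exact ⟨(part1 C).mpr h1, fun D hD => h2 D ((part1 D).mp hD)⟩
end
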